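/- arXiv:2601.21707 — 2 statements merged into one kernel-verified Lean document; each statement's English description precedes it below -/
import Mathlib

section
/- Let H₂ be a complex Hilbert space, H₁ ⊆ H₂ a closed (complete) subspace, X a nonempty set, and ξ₂ : X → H₂ a family of vectors. Define ξ₁(x) to be the orthogonal projection of ξ₂(x) onto H₁ for each x ∈ X (so that for f ∈ H₁ one has ⟨f, ξ₁(x)⟩ = ⟨f, ξ₂(x)⟩, i.e., ξ₁ is the family of kernel slices of H₁). For a subset X' ⊆ X let G_m := closure of span{ξ_m(x) : x ∈ X'} for m = 1,2. Then for every F ∈ H₁ and every X' ⊆ X, the distance from F to G₁ is at most the distance from F to G₂: inf_{g ∈ G₁} ‖F − g‖ ≤ inf_{g ∈ G₂} ‖F − g‖. -/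
/-!
The orthogonal projection `P` onto `K` is 1-Lipschitz, fixes `F`, and maps `G₂` into `G₁`
(it sends each `ξ₂ x` to `ξ₁ x`). Hence every `g ∈ G₂` yields `P g ∈ G₁` with
`‖F - P g‖ = ‖P (F - g)‖ ≤ ‖F - g‖`.
-/

open Metric Set

theorem Metric.infDist_apply_le_infDist_of_mapsTo {α : Type*} [PseudoMetricSpace α]
    {f : α → α} {s t : Set α} (hf : LipschitzWith 1 f) (hst : MapsTo f s t) (hs : s.Nonempty)
    (x : α) : infDist (f x) t ≤ infDist x s :=
  (le_infDist hs).2 fun y hy =>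
    calc infDist (f x) t ≤ dist (f x) (f y) := infDist_le_dist_of_mem (hst hy)
      _ ≤ dist x y := by simpa using hf.dist_le_mul x y

theorem ContinuousLinearMap.mapsTo_closure_span {𝕜 E F : Type*} [Semiring 𝕜]
    [AddCommMonoid E] [Module 𝕜 E] [TopologicalSpace E]
    [AddCommMonoid F] [Module 𝕜 F] [TopologicalSpace F]
    (f : E →L[𝕜] F) (s : Set E) :
    MapsTo f (closure (Submodule.span 𝕜 s)) (closure (Submodule.span 𝕜 (f '' s))) :=
  MapsTo.closure (fun _ hv => Submodule.apply_mem_span_image_of_mem_span (f : E →ₗ[𝕜] F) hv)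
    f.continuous

theorem Submodule.lipschitzWith_one_starProjection {𝕜 E : Type*} [RCLike 𝕜]
    [NormedAddCommGroup E] [InnerProductSpace 𝕜 E] (K : Submodule 𝕜 E)
    [K.HasOrthogonalProjection] : LipschitzWith 1 K.starProjection :=
  K.starProjection.lipschitz.weaken K.starProjection_norm_le

theorem optimal_kernel_in_nested_RKHS_general
    {H : Type*} [NormedAddCommGroup H] [InnerProductSpace ℂ H] [CompleteSpace H]
    {X : Type*}
    (K : Submodule ℂ H) (hK : IsClosed (K : Set H)) (ξ₂ : X → H)
    (F : H) (hF : F ∈ K) (X' : Set X) :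
    haveI : CompleteSpace K := hK.completeSpace_coe
    Metric.infDist F
        (closure (Submodule.span ℂ
          ((fun x => ((Submodule.orthogonalProjectionOnto K (ξ₂ x) : K) : H)) '' X') : Set H))
      ≤ Metric.infDist F (closure (Submodule.span ℂ (ξ₂ '' X') : Set H)) := by
  have : CompleteSpace K := hK.completeSpace_coe
  have hmaps := K.starProjection.mapsTo_closure_span (ξ₂ '' X')
  rw [image_image] at hmaps
  have h := infDist_apply_le_infDist_of_mapsTo K.lipschitzWith_one_starProjection hmaps
    ⟨0, subset_closure (Submodule.zero_mem _)⟩ F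
  rwa [K.starProjection_eq_self_iff.2 hF] at h

/-- **Optimal kernel in nested RKHSs.** Let `K` be a closed subspace of the complex
Hilbert space `H` (playing the role of `H₁ ⊆ H₂`), `ξ₂ : X → H` a family of kernel
slices of `H₂`, and `ξ₁ x := orthogonalProjection K (ξ₂ x)` the corresponding kernel
slices of `H₁`. For any `X' ⊆ X`, let `G_m` be the closure of the span of
`{ξ_m x : x ∈ X'}`. Then every `F ∈ K` is at least as close to `G₁` as to `G₂`. -/
theorem optimal_kernel_in_nested_RKHS
    {H : Type*} [NormedAddCommGroup H] [InnerProductSpace ℂ H] [CompleteSpace H]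
    {X : Type*} [Nonempty X]
    (K : Submodule ℂ H) (hK : IsClosed (K : Set H)) (ξ₂ : X → H)
    (F : H) (hF : F ∈ K) (X' : Set X) :
    haveI : CompleteSpace K := hK.completeSpace_coe
    Metric.infDist F
        (closure (Submodule.span ℂ
          ((fun x => ((Submodule.orthogonalProjectionOnto K (ξ₂ x) : K) : H)) '' X') : Set H))
      ≤ Metric.infDist F (closure (Submodule.span ℂ (ξ₂ '' X') : Set H)) :=
  optimal_kernel_in_nested_RKHS_general K hK ξ₂ F hF X'
end

section
/- Let a, z ∈ ℂ with |a| < 1 and |z| < 1, let D ∈ ℕ, and let L_j^a(z) := (sqrt(1 − |a|²)/(1 − conj(a)·z)) · B^a(z)^j denote the discrete Laguerre functions, where B^a(z) := (z − a)/(1 − conj(a)·z). Then the tail series converges and Σ_{j=D}^{∞} |L_j^a(z)|² = |B^a(z)|^{2D} / (1 − |z|²). -/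
/-- The Blaschke factor with parameter `a` in the open unit disk. -/
noncomputable def blaschke (a z : ℂ) : ℂ := (z - a) / (1 - starRingEnd ℂ a * z)

/-- The `j`-th discrete Laguerre function with parameter `a`. -/
noncomputable def laguerre (a : ℂ) (j : ℕ) (z : ℂ) : ℂ :=
  ((Real.sqrt (1 - ‖a‖ ^ 2) : ℂ) / (1 - starRingEnd ℂ a * z)) * blaschke a z ^ j

/-!
`|L_j^a(z)|² = c r ^ j` with `c = (1 - |a|²) / |1 - conj(a) z|²` and `r = |B^a(z)|²`, so the tail
is the geometric sum `c r ^ D / (1 - r)`. The identity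
`|1 - conj(a) z|² - |z - a|² = (1 - |a|²)(1 - |z|²)` gives `1 - r = c (1 - |z|²)`, which shows
`r < 1` and turns that sum into `r ^ D / (1 - |z|²)`.
-/

open Complex ComplexConjugate

theorem hasSum_subtype_le_iff_hasSum_nat_add {M : Type*} [AddCommMonoid M] [TopologicalSpace M]
    {f : ℕ → M} {a : M} (D : ℕ) :
    HasSum (fun j : {j : ℕ // D ≤ j} => f j) a ↔ HasSum (fun n => f (n + D)) a := by
  have hshift : Function.Injective fun n : ℕ => (⟨n + D, Nat.le_add_left D n⟩ : {j // D ≤ j}) :=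
    fun m n h => by simpa using congrArg Subtype.val h
  refine (hshift.hasSum_iff ?_).symm
  rintro ⟨j, hj⟩ hj_notMem
  exact absurd ⟨j - D, Subtype.ext (Nat.sub_add_cancel hj)⟩ hj_notMem

theorem hasSum_geometric_tail {r : ℝ} (c : ℝ) (h₀ : 0 ≤ r) (h₁ : r < 1) (D : ℕ) :
    HasSum (fun j : {j : ℕ // D ≤ j} => c * r ^ (j : ℕ)) (c * r ^ D / (1 - r)) := by
  rw [hasSum_subtype_le_iff_hasSum_nat_add (f := fun j => c * r ^ j)]
  have hgeom := (hasSum_geometric_of_lt_one h₀ h₁).mul_left (c * r ^ D)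
  simp only [mul_assoc, ← pow_add, add_comm D] at hgeom
  rwa [div_eq_mul_inv, mul_assoc]

theorem one_sub_conj_mul_ne_zero {a z : ℂ} (ha : ‖a‖ < 1) (hz : ‖z‖ ≤ 1) :
    1 - conj a * z ≠ 0 := by
  refine sub_ne_zero.mpr fun h => ?_
  have hlt : ‖conj a * z‖ < 1 := by
    rw [norm_mul, norm_conj]
    exact mul_lt_one_of_nonneg_of_lt_one_left (norm_nonneg a) ha hz
  rw [← h, norm_one] at hlt
  exact lt_irrefl _ hlt

theorem sq_norm_one_sub_conj_mul_sub_sq_norm_sub (a z : ℂ) :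
    ‖1 - conj a * z‖ ^ 2 - ‖z - a‖ ^ 2 = (1 - ‖a‖ ^ 2) * (1 - ‖z‖ ^ 2) := by
  simp only [Complex.sq_norm, normSq_apply, sub_re, sub_im, one_re, one_im, mul_re, mul_im, conj_re,
    conj_im]
  ring

theorem one_sub_sq_norm_blaschke {a z : ℂ} (h : 1 - conj a * z ≠ 0) :
    1 - ‖blaschke a z‖ ^ 2 = (1 - ‖a‖ ^ 2) * (1 - ‖z‖ ^ 2) / ‖1 - conj a * z‖ ^ 2 := by
  have h' : ‖1 - conj a * z‖ ≠ 0 := norm_ne_zero_iff.mpr h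
  rw [blaschke, norm_div, div_pow, ← sq_norm_one_sub_conj_mul_sub_sq_norm_sub, sub_div,
    div_self (pow_ne_zero 2 h')]

theorem sq_norm_blaschke_lt_one {a z : ℂ} (ha : ‖a‖ < 1) (hz : ‖z‖ < 1) :
    ‖blaschke a z‖ ^ 2 < 1 := by
  have hpos : 0 < 1 - ‖blaschke a z‖ ^ 2 := by
    rw [one_sub_sq_norm_blaschke (one_sub_conj_mul_ne_zero ha hz.le)]
    have : 0 < 1 - ‖a‖ ^ 2 := by nlinarith [norm_nonneg a]
    have : 0 < 1 - ‖z‖ ^ 2 := by nlinarith [norm_nonneg z]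
    have : 0 < ‖1 - conj a * z‖ := norm_pos_iff.mpr (one_sub_conj_mul_ne_zero ha hz.le)
    positivity
  linarith

theorem sq_norm_laguerre {a : ℂ} (ha : ‖a‖ ≤ 1) (j : ℕ) (z : ℂ) :
    ‖laguerre a j z‖ ^ 2 = (1 - ‖a‖ ^ 2) / ‖1 - conj a * z‖ ^ 2 * (‖blaschke a z‖ ^ 2) ^ j := by
  have hs : 0 ≤ 1 - ‖a‖ ^ 2 := by nlinarith [norm_nonneg a]
  rw [laguerre, norm_mul, norm_div, norm_pow, mul_pow, div_pow, ← pow_mul, mul_comm j 2, pow_mul,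
    norm_real, Real.norm_eq_abs, sq_abs, Real.sq_sqrt hs]

/-- **Tail sum of squared discrete Laguerre functions.** For `|a| < 1`, `|z| < 1`
and `D ∈ ℕ`, the series `∑_{j ≥ D} |L_j^a(z)|²` converges and equals
`|B^a(z)|^{2D} / (1 − |z|²)`. -/
theorem laguerre_tail_sum (a z : ℂ) (ha : ‖a‖ < 1) (hz : ‖z‖ < 1)
    (D : ℕ) :
    Summable (fun j : {j : ℕ // D ≤ j} => ‖laguerre a j.1 z‖ ^ 2) ∧
    ∑' j : {j : ℕ // D ≤ j}, ‖laguerre a j.1 z‖ ^ 2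
      = ‖blaschke a z‖ ^ (2 * D) / (1 - ‖z‖ ^ 2) := by
  have hd := one_sub_conj_mul_ne_zero ha hz.le
  have hsum : HasSum (fun j : {j : ℕ // D ≤ j} => ‖laguerre a j.1 z‖ ^ 2)
      ((1 - ‖a‖ ^ 2) / ‖1 - conj a * z‖ ^ 2 * (‖blaschke a z‖ ^ 2) ^ D
        / (1 - ‖blaschke a z‖ ^ 2)) := by
    simpa only [sq_norm_laguerre ha.le] using hasSum_geometric_tail _ (sq_nonneg _)
      (sq_norm_blaschke_lt_one ha hz) D
  refine ⟨hsum.summable, hsum.tsum_eq.trans ?_⟩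
  have hs : 1 - ‖a‖ ^ 2 ≠ 0 := by nlinarith [norm_nonneg a]
  have hd' : ‖1 - conj a * z‖ ≠ 0 := norm_ne_zero_iff.mpr hd
  rw [one_sub_sq_norm_blaschke hd, pow_mul]
  field_simp
end
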